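/- arXiv:1903.04415 — 2 statements merged into one kernel-verified Lean document; each statement's English description precedes it below -/
import Mathlib

section
/- Let Ω ⊂ ℝ^(2n+1−k) be open, φ : Ω → ℝ^k continuous, and a ∈ Ω. If φ is intrinsic differentiable at a, then for every j = 1,…,2n−k the ∂^{φ_j}-derivative ∂^{φ_j}φ(a) exists and its i-th component equals [J^φφ(a)]_{i,j} for every i = 1,…,k; in particular the limit lim_{s→0} (φ(γ(s)) − φ(a))/s has the same value for every integral curve γ of W_j^φ with γ(0) = a. -/
open scoped BigOperators
open MeasureTheory Filter Topology

noncomputable section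

namespace HeisGraph

/-! ### Points of the Heisenberg group ℍⁿ, identified with ℝ^{2n+1} -/

/-- Index type for the coordinates of a point of ℍⁿ: `x`-coordinates, `y`-coordinates
and the vertical coordinate `t`. -/
abbrev HIdxT (n : ℕ) := Sum (Fin n) (Sum (Fin n) Unit)

/-- ℍⁿ as a Euclidean space (so that the Euclidean norm is available). -/
abbrev HP (n : ℕ) := EuclideanSpace ℝ (HIdxT n)

variable {n k : ℕ}

def xPart (p : HP n) (i : Fin n) : ℝ := p (Sum.inl i)
def yPart (p : HP n) (i : Fin n) : ℝ := p (Sum.inr (Sum.inl i))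
def tPart (p : HP n) : ℝ := p (Sum.inr (Sum.inr ()))

def mkH (x y : Fin n → ℝ) (t : ℝ) : HP n :=
  WithLp.toLp 2 (fun i => Sum.elim x (Sum.elim y (fun _ => t)) i)

/-- The Heisenberg group product on ℝ^{2n+1}. -/
def hMul (p q : HP n) : HP n :=
  mkH (fun i => xPart p i + xPart q i) (fun i => yPart p i + yPart q i)
    (tPart p + tPart q + (1 / 2) * ∑ i : Fin n, (xPart p i * yPart q i - xPart q i * yPart p i))

/-- The Heisenberg group inverse: `p⁻¹ = -p`. -/
def hInv (p : HP n) : HP n := -p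

/-- The intrinsic dilations of ℍⁿ. -/
def dilH (lam : ℝ) (p : HP n) : HP n :=
  mkH (fun i => lam * xPart p i) (fun i => lam * yPart p i) (lam ^ 2 * tPart p)

/-- The homogeneous norm `‖p‖_∞ = max { |(x,y)| , |t|^{1/2} }`. -/
def normH (p : HP n) : ℝ :=
  max (Real.sqrt (∑ i, xPart p i ^ 2 + ∑ i, yPart p i ^ 2)) (Real.sqrt |tPart p|)

/-- The homogeneous distance `d_∞(p,q) = ‖q⁻¹ · p‖_∞`. -/
def dInf (p q : HP n) : ℝ := normH (hMul (hInv q) p)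

/-! ### Points of 𝕄 ≅ ℝ^{2n+1-k}: coordinates (v_{k+1..n}, η_{1..k}, w_{k+1..n}, τ) -/

abbrev MIdxT (n k : ℕ) := Sum (Fin (n - k)) (Sum (Fin k) (Sum (Fin (n - k)) Unit))

abbrev MP (n k : ℕ) := EuclideanSpace ℝ (MIdxT n k)

def vPart (a : MP n k) (j : Fin (n - k)) : ℝ := a (Sum.inl j)
def etaPart (a : MP n k) (i : Fin k) : ℝ := a (Sum.inr (Sum.inl i))
def wPart (a : MP n k) (j : Fin (n - k)) : ℝ := a (Sum.inr (Sum.inr (Sum.inl j)))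
def tauPart (a : MP n k) : ℝ := a (Sum.inr (Sum.inr (Sum.inr ())))

def mkM (v : Fin (n - k) → ℝ) (η : Fin k → ℝ) (w : Fin (n - k) → ℝ) (τ : ℝ) : MP n k :=
  WithLp.toLp 2 (fun i => Sum.elim v (Sum.elim η (Sum.elim w (fun _ => τ))) i)

/-- The embedding `i : ℝ^{2n+1-k} → ℍⁿ` onto the subgroup 𝕄 (`k` zeros among the
`x`-coordinates first). -/
def iota (a : MP n k) : HP n :=
  mkH (fun i => if h : (i : ℕ) < k then 0 else vPart a ⟨(i : ℕ) - k, by have := i.isLt; omega⟩)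
    (fun i => if h : (i : ℕ) < k then etaPart a ⟨(i : ℕ), h⟩
      else wPart a ⟨(i : ℕ) - k, by have := i.isLt; omega⟩)
    (tauPart a)

/-- The embedding `j : ℝ^k → ℍⁿ` onto the horizontal subgroup ℍ. -/
def jmap (h : EuclideanSpace ℝ (Fin k)) : HP n :=
  mkH (fun i => if hi : (i : ℕ) < k then h ⟨(i : ℕ), hi⟩ else 0) (fun _ => 0) 0

/-- The projection `π_𝕄 : ℍⁿ → 𝕄` determined by the unique factorization `p = m·h`,
`m ∈ 𝕄`, `h ∈ ℍ` (written in the coordinates of `MP n k`). -/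
def piM (hk : k ≤ n) (p : HP n) : MP n k :=
  mkM (fun j => xPart p ⟨(j : ℕ) + k, by have := j.isLt; omega⟩)
    (fun i => yPart p ⟨(i : ℕ), lt_of_lt_of_le i.isLt hk⟩)
    (fun j => yPart p ⟨(j : ℕ) + k, by have := j.isLt; omega⟩)
    (tPart p + (1 / 2) * ∑ i : Fin k,
      xPart p ⟨(i : ℕ), lt_of_lt_of_le i.isLt hk⟩ * yPart p ⟨(i : ℕ), lt_of_lt_of_le i.isLt hk⟩)

/-- The unit vertical vector of `MP n k`. -/
def tauUnit : MP n k := mkM 0 0 0 1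

/-- The product `⋆` induced on ℝ^{2n+1-k} by the group structure of 𝕄. -/
def starMul (a b : MP n k) : MP n k :=
  a + b + ((1 / 2) * ∑ j : Fin (n - k), (vPart a j * wPart b j - vPart b j * wPart a j)) • tauUnit

/-- The dilations `δ_λ^⋆` induced on ℝ^{2n+1-k}. -/
def dilStar (lam : ℝ) (a : MP n k) : MP n k :=
  mkM (fun j => lam * vPart a j) (fun i => lam * etaPart a i) (fun j => lam * wPart a j)
    (lam ^ 2 * tauPart a)

/-- The homogeneous norm of 𝕄 read on `MP n k` (it equals `normH (iota a)`). -/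
def normM (a : MP n k) : ℝ :=
  max (Real.sqrt (∑ j, vPart a j ^ 2 + ∑ i, etaPart a i ^ 2 + ∑ j, wPart a j ^ 2))
    (Real.sqrt |tauPart a|)

/-- The graph map `Φ(a) = i(a) · j(φ(a))`. -/
def graphMap (φ : MP n k → EuclideanSpace ℝ (Fin k)) (a : MP n k) : HP n :=
  hMul (iota a) (jmap (φ a))

/-- The graph distance `d_φ(a,b) = ‖π_𝕄(Φ(b)⁻¹ · Φ(a))‖_∞`. -/
def dPhi (hk : k ≤ n) (φ : MP n k → EuclideanSpace ℝ (Fin k)) (a b : MP n k) : ℝ :=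
  normM (piM hk (hMul (hInv (graphMap φ b)) (graphMap φ a)))

/-- `L : ℝ^{2n+1-k} → ℝ^k` is ⋆-linear: a homomorphism for `⋆`, homogeneous of degree 1
for the dilations `δ_λ^⋆`. -/
def IsStarLinear (L : MP n k → EuclideanSpace ℝ (Fin k)) : Prop :=
  (∀ a b, L (starMul a b) = L a + L b) ∧ ∀ lam > (0 : ℝ), ∀ a, L (dilStar lam a) = lam • L a

/-! ### Horizontal coordinates, matrices, cubes -/

/-- Index type for the `2n-k` horizontal coordinates of `MP n k` (τ deleted). -/
abbrev HorIdx (n k : ℕ) := Sum (Fin (n - k)) (Sum (Fin k) (Fin (n - k)))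

/-- The projection `π` deleting the vertical coordinate τ. -/
def piHor (a : MP n k) : HorIdx n k → ℝ :=
  Sum.elim (fun j => vPart a j) (Sum.elim (fun i => etaPart a i) (fun j => wPart a j))

/-- The ⋆-linear map associated to a `k × (2n-k)` matrix: `L(a) = M · π(a)`. -/
def ofMatrix (M : Matrix (Fin k) (HorIdx n k) ℝ) (a : MP n k) : EuclideanSpace ℝ (Fin k) :=
  WithLp.toLp 2 (fun i => M.mulVec (piHor a) i)

/-- The open coordinate cube `I_r(a)`. -/
def cube (r : ℝ) (a : MP n k) : Set (MP n k) := {p | ∀ i, |p i - a i| < r}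

/-- The closed coordinate cube `cl(I_r(a))`. -/
def closedCube (r : ℝ) (a : MP n k) : Set (MP n k) := {p | ∀ i, |p i - a i| ≤ r}

/-! ### Intrinsic differentiability -/

/-- The quantitative condition expressing uniform intrinsic differentiability of `φ`
at `a₀` (relative to `Ω`) with intrinsic differential `L`:
`lim_{r→0} sup_{a,b ∈ I_r(a₀)∩Ω} |φ(b) - φ(a) - L(a⁻¹ ⋆ b)| / d_φ(b,a) = 0`. -/
def UIDcond (hk : k ≤ n) (Ω : Set (MP n k)) (φ : MP n k → EuclideanSpace ℝ (Fin k))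
    (a₀ : MP n k) (L : MP n k → EuclideanSpace ℝ (Fin k)) : Prop :=
  ∀ ε > (0 : ℝ), ∃ r > (0 : ℝ), ∀ a ∈ cube r a₀ ∩ Ω, ∀ b ∈ cube r a₀ ∩ Ω,
    ‖φ b - φ a - L (starMul (-a) b)‖ ≤ ε * dPhi hk φ b a

/-- `φ` is uniformly intrinsic differentiable at `a₀`. -/
def UIDAt (hk : k ≤ n) (Ω : Set (MP n k)) (φ : MP n k → EuclideanSpace ℝ (Fin k))
    (a₀ : MP n k) : Prop :=
  ∃ L, IsStarLinear L ∧ UIDcond hk Ω φ a₀ L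

/-- `φ` is uniformly intrinsic differentiable at `a₀` with intrinsic Jacobian matrix `M`. -/
def UIDAtWith (hk : k ≤ n) (Ω : Set (MP n k)) (φ : MP n k → EuclideanSpace ℝ (Fin k))
    (a₀ : MP n k) (M : Matrix (Fin k) (HorIdx n k) ℝ) : Prop :=
  UIDcond hk Ω φ a₀ (ofMatrix M)

/-- The condition expressing intrinsic differentiability of `φ` at `a₀` with intrinsic
differential `L`: `lim_{a→a₀} |φ(a) - φ(a₀) - L(a₀⁻¹ ⋆ a)| / d_φ(a,a₀) = 0`. -/
def IDcond (hk : k ≤ n) (Ω : Set (MP n k)) (φ : MP n k → EuclideanSpace ℝ (Fin k))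
    (a₀ : MP n k) (L : MP n k → EuclideanSpace ℝ (Fin k)) : Prop :=
  ∀ ε > (0 : ℝ), ∃ δ > (0 : ℝ), ∀ a ∈ Ω, ‖a - a₀‖ < δ →
    ‖φ a - φ a₀ - L (starMul (-a₀) a)‖ ≤ ε * dPhi hk φ a a₀

/-- `φ` is intrinsic differentiable at `a₀`. -/
def IDAt (hk : k ≤ n) (Ω : Set (MP n k)) (φ : MP n k → EuclideanSpace ℝ (Fin k))
    (a₀ : MP n k) : Prop :=
  ∃ L, IsStarLinear L ∧ IDcond hk Ω φ a₀ L

/-- `φ` is intrinsic differentiable at `a₀` with intrinsic Jacobian matrix `M`. -/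
def IDAtWith (hk : k ≤ n) (Ω : Set (MP n k)) (φ : MP n k → EuclideanSpace ℝ (Fin k))
    (a₀ : MP n k) (M : Matrix (Fin k) (HorIdx n k) ℝ) : Prop :=
  IDcond hk Ω φ a₀ (ofMatrix M)

/-! ### The vector fields `W_j^φ` -/

/-- The `2n-k` vector fields `W^φ` on `MP n k`:
`W_j^φ = ∂_{v_j} - (1/2) w_j ∂_τ`, `∇^{φ_i} = ∂_{η_i} + φ_i ∂_τ`,
`W^φ = ∂_{w_j} + (1/2) v_j ∂_τ`. -/
def Wfield (φ : MP n k → EuclideanSpace ℝ (Fin k)) (ℓ : HorIdx n k) (p : MP n k) : MP n k :=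
  match ℓ with
  | Sum.inl j => mkM (Pi.single j 1) 0 0 (-(1 / 2) * wPart p j)
  | Sum.inr (Sum.inl i) => mkM 0 (Pi.single i 1) 0 (φ p i)
  | Sum.inr (Sum.inr j) => mkM 0 0 (Pi.single j 1) ((1 / 2) * vPart p j)

/-- For `ψ` of class C¹ (Euclidean sense), the intrinsic Jacobian matrix
`J^ψψ(m) = [(W_ℓ^ψ ψ_i)(m)]_{i,ℓ}`. -/
def JC1 (ψ : MP n k → EuclideanSpace ℝ (Fin k)) (m : MP n k) :
    Matrix (Fin k) (HorIdx n k) ℝ :=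
  Matrix.of fun i ℓ => fderiv ℝ ψ m (Wfield ψ ℓ m) i

/-- `φ` has `∂^{φ_ℓ}`-derivative `D` at `a`: along every integral curve of `W_ℓ^φ`
through `a` the difference quotients of `φ` converge to `D`. -/
def HasWDerivAt (Ω : Set (MP n k)) (φ : MP n k → EuclideanSpace ℝ (Fin k)) (ℓ : HorIdx n k)
    (a : MP n k) (D : EuclideanSpace ℝ (Fin k)) : Prop :=
  ∀ δ > (0 : ℝ), ∀ γ : ℝ → MP n k, γ 0 = a →
    (∀ s ∈ Set.Ioo (-δ) δ, γ s ∈ Ω) →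
    (∀ s ∈ Set.Ioo (-δ) δ, HasDerivAt γ (Wfield φ ℓ (γ s)) s) →
    Tendsto (fun s : ℝ => s⁻¹ • (φ (γ s) - φ a)) (𝓝[≠] (0 : ℝ)) (𝓝 D)

/-- The little-½-Hölder condition on `Ω`. -/
def LittleHolder (Ω : Set (MP n k)) (φ : MP n k → EuclideanSpace ℝ (Fin k)) : Prop :=
  ∀ Ω' : Set (MP n k), IsOpen Ω' → IsCompact (closure Ω') → closure Ω' ⊆ Ω →
    ∀ ε > (0 : ℝ), ∃ r > (0 : ℝ), ∀ a ∈ Ω', ∀ b ∈ Ω', a ≠ b → ‖a - b‖ ≤ r →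
      ‖φ a - φ b‖ ≤ ε * Real.sqrt ‖a - b‖

/-! ### `C¹_ℍ` functions on ℍⁿ -/

/-- The horizontal vector fields `X_i`, `Y_i` of ℍⁿ. -/
def Zfield (i : Sum (Fin n) (Fin n)) (p : HP n) : HP n :=
  match i with
  | Sum.inl i => mkH (Pi.single i 1) 0 (-(1 / 2) * yPart p i)
  | Sum.inr i => mkH 0 (Pi.single i 1) ((1 / 2) * xPart p i)

/-- `f : U → ℝ^k` is of class `C¹_ℍ` with horizontal derivatives `Df`: `f` is continuous
on `U`, the `Df p i` are continuous on `U` and represent the distributional derivatives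
of `f` along the horizontal vector fields. -/
def C1H (U : Set (HP n)) (f : HP n → EuclideanSpace ℝ (Fin k))
    (Df : HP n → Sum (Fin n) (Fin n) → EuclideanSpace ℝ (Fin k)) : Prop :=
  ContinuousOn f U ∧ (∀ i, ContinuousOn (fun p => Df p i) U) ∧
    ∀ (i : Sum (Fin n) (Fin n)) (j : Fin k) (ψ : HP n → ℝ),
      ContDiff ℝ (⊤ : ℕ∞) ψ → HasCompactSupport ψ → tsupport ψ ⊆ U →
      (∫ p in U, f p j * fderiv ℝ ψ p (Zfield i p)) = -∫ p in U, Df p i j * ψ p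

/-! ### The quasi-distance ρ_φ -/

/-- The function `ρ_φ(a,b)`. -/
def rhoPhi (φ : MP n k → EuclideanSpace ℝ (Fin k)) (a b : MP n k) : ℝ :=
  max
    (Real.sqrt (∑ j, (vPart a j - vPart b j) ^ 2 + ∑ i, (etaPart a i - etaPart b i) ^ 2 +
      ∑ j, (wPart a j - wPart b j) ^ 2))
    (Real.sqrt |tauPart a - tauPart b +
      (1 / 2) * ∑ i, (φ a i + φ b i) * (etaPart b i - etaPart a i) +
      (1 / 2) * ∑ j, (vPart a j * wPart b j - vPart b j * wPart a j)|)

/-! ### Families of exponential maps -/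

/-- A family of exponential maps for `φ` near `a`, as in Definition 4.2 of the paper. -/
structure ExpFamily (Ω : Set (MP n k)) (φ : MP n k → EuclideanSpace ℝ (Fin k))
    (a : MP n k) where
  δ₁ : ℝ
  δ₂ : ℝ
  pos : 0 < δ₂
  lt : δ₂ < δ₁
  sub : closedCube δ₁ a ⊆ Ω
  E : HorIdx n k → ℝ → MP n k → MP n k
  ω : HorIdx n k → MP n k → EuclideanSpace ℝ (Fin k)
  maps : ∀ ℓ, ∀ s ∈ Set.Icc (-δ₂) δ₂, ∀ b ∈ closedCube δ₂ a, E ℓ s b ∈ closedCube δ₁ a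
  start : ∀ ℓ, ∀ b ∈ closedCube δ₂ a, E ℓ 0 b = b
  isIntegral : ∀ ℓ, ∀ b ∈ closedCube δ₂ a, ∀ s ∈ Set.Icc (-δ₂) δ₂,
    HasDerivAt (fun r => E ℓ r b) (Wfield φ ℓ (E ℓ s b)) s
  contOmega : ∀ ℓ (i : Fin k), ContinuousOn (fun b => ω ℓ b i) Ω
  chain : ∀ ℓ, ∀ b ∈ closedCube δ₂ a, ∀ s ∈ Set.Icc (-δ₂) δ₂, ∀ i : Fin k,
    φ (E ℓ s b) i - φ b i = ∫ r in (0 : ℝ)..s, ω ℓ (E ℓ r b) i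


/-!
Along an integral curve `γ` of `W_ℓ^φ` through `a` the horizontal coordinates move affinely,
`π(γ s) = π(a) + s e_ℓ`, so the ⋆-linear part is `L(a⁻¹ ⋆ γ s) = s • M_{·ℓ}`. The vertical
coordinate of `π_𝕄(Φ(a)⁻¹ · Φ(γ s))` has derivative the τ-component of `W_ℓ^φ(γ r) - W_ℓ^φ(a)`,
which is at most `|φ(γ r) - φ(a)|`; hence `d_φ(γ s, a) ≤ |s| + √(u |s|)` with
`u = max_{|r| ≤ |s|} |φ(γ r) - φ(a)|`. Intrinsic differentiability with `ε = 1` bounds `u` by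
`(‖M_{·ℓ}‖ + 1)|s| + √(u |s|)`, which improves itself to `u = O(s)`, so `d_φ(γ s, a) = O(s)`.
The intrinsic differentiability estimate then says exactly that `φ ∘ γ` is differentiable at `0`
with derivative `M_{·ℓ}`.
-/

@[simp] lemma xPart_mkH (x y : Fin n → ℝ) (t : ℝ) (i : Fin n) : xPart (mkH x y t) i = x i := rfl
@[simp] lemma yPart_mkH (x y : Fin n → ℝ) (t : ℝ) (i : Fin n) : yPart (mkH x y t) i = y i := rfl
@[simp] lemma tPart_mkH (x y : Fin n → ℝ) (t : ℝ) : tPart (mkH x y t) = t := rfl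

@[simp] lemma vPart_mkM (v : Fin (n - k) → ℝ) (η : Fin k → ℝ) (w : Fin (n - k) → ℝ) (τ : ℝ)
    (j : Fin (n - k)) : vPart (mkM v η w τ) j = v j := rfl
@[simp] lemma etaPart_mkM (v : Fin (n - k) → ℝ) (η : Fin k → ℝ) (w : Fin (n - k) → ℝ) (τ : ℝ)
    (i : Fin k) : etaPart (mkM v η w τ) i = η i := rfl
@[simp] lemma wPart_mkM (v : Fin (n - k) → ℝ) (η : Fin k → ℝ) (w : Fin (n - k) → ℝ) (τ : ℝ)
    (j : Fin (n - k)) : wPart (mkM v η w τ) j = w j := rfl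
@[simp] lemma tauPart_mkM (v : Fin (n - k) → ℝ) (η : Fin k → ℝ) (w : Fin (n - k) → ℝ) (τ : ℝ) :
    tauPart (mkM v η w τ) = τ := rfl

@[simp] lemma xPart_hInv (p : HP n) (i : Fin n) : xPart (hInv p) i = -xPart p i := rfl
@[simp] lemma yPart_hInv (p : HP n) (i : Fin n) : yPart (hInv p) i = -yPart p i := rfl
@[simp] lemma tPart_hInv (p : HP n) : tPart (hInv p) = -tPart p := rfl

@[simp] lemma piHor_inl (a : MP n k) (j : Fin (n - k)) : piHor a (Sum.inl j) = vPart a j := rfl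
@[simp] lemma piHor_inr_inl (a : MP n k) (i : Fin k) :
    piHor a (Sum.inr (Sum.inl i)) = etaPart a i := rfl
@[simp] lemma piHor_inr_inr (a : MP n k) (j : Fin (n - k)) :
    piHor a (Sum.inr (Sum.inr j)) = wPart a j := rfl

lemma sum_fin_eq_sum_lt_add_sum_ge (hk : k ≤ n) (F : Fin n → ℝ) :
    ∑ i, F i = ∑ i : Fin k, F ⟨i, by omega⟩ + ∑ j : Fin (n - k), F ⟨j + k, by omega⟩ := by
  rw [← (finSumFinEquiv.trans (finCongr (by omega : k + (n - k) = n))).sum_comp,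
    Fintype.sum_sum_type]
  congr 1
  all_goals exact Finset.sum_congr rfl fun i _ => congrArg F (Fin.ext (by simp [add_comm]))

def vertDefect (φ : MP n k → EuclideanSpace ℝ (Fin k)) (a b : MP n k) : ℝ :=
  tauPart b - tauPart a - ∑ i, φ a i * (etaPart b i - etaPart a i)
    - 1 / 2 * ∑ j, (vPart a j * wPart b j - vPart b j * wPart a j)

section Graph

variable {φ : MP n k → EuclideanSpace ℝ (Fin k)} {a b : MP n k}

@[simp] lemma xPart_graphMap_of_lt (i : Fin k) (h : (i : ℕ) < n) :
    xPart (graphMap φ a) ⟨i, h⟩ = φ a i := by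
  simp [graphMap, hMul, iota, jmap]

@[simp] lemma yPart_graphMap_of_lt (i : Fin k) (h : (i : ℕ) < n) :
    yPart (graphMap φ a) ⟨i, h⟩ = etaPart a i := by
  simp [graphMap, hMul, iota, jmap]

@[simp] lemma xPart_graphMap_add (j : Fin (n - k)) :
    xPart (graphMap φ a) ⟨j + k, by omega⟩ = vPart a j := by
  simp [graphMap, hMul, iota, jmap]

@[simp] lemma yPart_graphMap_add (j : Fin (n - k)) :
    yPart (graphMap φ a) ⟨j + k, by omega⟩ = wPart a j := by
  simp [graphMap, hMul, iota, jmap]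

lemma tPart_graphMap (hk : k ≤ n) :
    tPart (graphMap φ a) = tauPart a - 1 / 2 * ∑ i : Fin k, φ a i * etaPart a i := by
  simp only [graphMap, hMul, tPart_mkH]
  rw [sum_fin_eq_sum_lt_add_sum_ge hk]
  simp [iota, jmap, sub_eq_add_neg]

lemma piHor_piM_graph (hk : k ≤ n) :
    piHor (piM hk (hMul (hInv (graphMap φ a)) (graphMap φ b))) = piHor b - piHor a := by
  ext (j | i | j) <;> simp [piHor, piM, hMul, neg_add_eq_sub]

lemma tauPart_piM_graph (hk : k ≤ n) :
    tauPart (piM hk (hMul (hInv (graphMap φ a)) (graphMap φ b))) = vertDefect φ a b := by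
  simp only [piM, tauPart_mkM, hMul, tPart_mkH, xPart_mkH, yPart_mkH, xPart_hInv, yPart_hInv,
    tPart_hInv]
  rw [sum_fin_eq_sum_lt_add_sum_ge hk]
  simp only [xPart_graphMap_of_lt, yPart_graphMap_of_lt, xPart_graphMap_add, yPart_graphMap_add,
    tPart_graphMap hk, vertDefect, mul_sub, mul_add, add_mul, neg_mul, mul_neg,
    Finset.sum_add_distrib, Finset.sum_sub_distrib, Finset.sum_neg_distrib]
  ring

lemma normM_eq (c : MP n k) : normM c = max √(∑ m, piHor c m ^ 2) √|tauPart c| := by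
  simp [normM, piHor, Fintype.sum_sum_type, add_assoc]

lemma dPhi_eq (hk : k ≤ n) :
    dPhi hk φ b a = max √(∑ m, (piHor b m - piHor a m) ^ 2) √|vertDefect φ a b| := by
  simp [dPhi, normM_eq, piHor_piM_graph, tauPart_piM_graph]

lemma dPhi_nonneg (hk : k ≤ n) : 0 ≤ dPhi hk φ b a :=
  le_max_of_le_left (Real.sqrt_nonneg _)

end Graph

lemma piHor_starMul_neg (a b : MP n k) : piHor (starMul (-a) b) = piHor b - piHor a := by
  ext (j | i | j) <;> simp [piHor, starMul, vPart, etaPart, wPart, tauUnit, mkM, sub_eq_neg_add]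

lemma ofMatrix_starMul_neg (M : Matrix (Fin k) (HorIdx n k) ℝ) {a b : MP n k} {ℓ : HorIdx n k}
    {s : ℝ} (h : piHor b = piHor a + s • Pi.single ℓ 1) :
    ofMatrix M (starMul (-a) b) = s • WithLp.toLp 2 (fun i => M i ℓ) := by
  ext i
  simp [ofMatrix, piHor_starMul_neg, h, Matrix.mulVec_smul]

@[simp] lemma piHor_Wfield (φ : MP n k → EuclideanSpace ℝ (Fin k)) (ℓ : HorIdx n k)
    (p : MP n k) : piHor (Wfield φ ℓ p) = Pi.single ℓ 1 := by
  ext m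
  rcases ℓ with j | i | j <;> rcases m with j' | i' | j' <;>
    simp [Wfield, piHor, Pi.single_apply]

section HorizontalLine

variable {φ : MP n k → EuclideanSpace ℝ (Fin k)} {ℓ : HorIdx n k} {a b : MP n k} {s : ℝ}

lemma vertDefect_of_piHor_eq (h : piHor b = piHor a + s • Pi.single ℓ 1) :
    vertDefect φ a b = tauPart b - tauPart a - s * tauPart (Wfield φ ℓ a) := by
  have hv (j) : vPart b j = vPart a j + s * (Pi.single ℓ 1 : HorIdx n k → ℝ) (Sum.inl j) := by
    simpa using congrFun h (Sum.inl j)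
  have hη (i) : etaPart b i
      = etaPart a i + s * (Pi.single ℓ 1 : HorIdx n k → ℝ) (Sum.inr (Sum.inl i)) := by
    simpa using congrFun h (Sum.inr (Sum.inl i))
  have hw (j) : wPart b j
      = wPart a j + s * (Pi.single ℓ 1 : HorIdx n k → ℝ) (Sum.inr (Sum.inr j)) := by
    simpa using congrFun h (Sum.inr (Sum.inr j))
  rcases ℓ with j | i | j <;>
    simp [vertDefect, Wfield, hv, hη, hw, Pi.single_apply, add_mul, mul_add, ite_mul, mul_ite] <;>
    ring

lemma abs_tauPart_Wfield_sub_le (h : piHor b = piHor a + s • Pi.single ℓ 1) :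
    |tauPart (Wfield φ ℓ b) - tauPart (Wfield φ ℓ a)| ≤ ‖φ b - φ a‖ := by
  rcases ℓ with j | i | j
  · have hw : wPart b j = wPart a j := by simpa using congrFun h (Sum.inr (Sum.inr j))
    simp [Wfield, hw]
  · simpa [Wfield] using PiLp.norm_apply_le (φ b - φ a) i
  · have hv : vPart b j = vPart a j := by simpa using congrFun h (Sum.inl j)
    simp [Wfield, hv]

end HorizontalLine

lemma abs_sub_sub_mul_le_of_hasDerivAt {S : Set ℝ} (hS : Convex ℝ S) {f f' : ℝ → ℝ} {c C : ℝ}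
    (hf : ∀ r ∈ S, HasDerivAt f (f' r) r) (hC : ∀ r ∈ S, |f' r - c| ≤ C) {x y : ℝ}
    (hx : x ∈ S) (hy : y ∈ S) : |f y - f x - (y - x) * c| ≤ C * |y - x| := by
  have := hS.norm_image_sub_le_of_norm_hasDerivWithin_le (f := fun r => f r - r * c)
    (fun r hr => ((hf r hr).sub ((hasDerivAt_id r).mul_const c)).hasDerivWithinAt)
    (by simpa using hC) hx hy
  rw [Real.norm_eq_abs, Real.norm_eq_abs] at this
  convert this using 2
  ring

section IntegralCurve

variable {γ : ℝ → MP n k} {g : MP n k} {r : ℝ}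

lemma hasDerivAt_piHor (h : HasDerivAt γ g r) (m : HorIdx n k) :
    HasDerivAt (fun s => piHor (γ s) m) (piHor g m) r := by
  rcases m with j | i | j <;> exact (PiLp.hasFDerivAt_apply 2 (γ r) _).comp_hasDerivAt r h

lemma hasDerivAt_tauPart (h : HasDerivAt γ g r) :
    HasDerivAt (fun s => tauPart (γ s)) (tauPart g) r :=
  (PiLp.hasFDerivAt_apply 2 (γ r) _).comp_hasDerivAt r h

variable {φ : MP n k → EuclideanSpace ℝ (Fin k)} {ℓ : HorIdx n k} {S : Set ℝ} {a : MP n k}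

lemma piHor_integralCurve (hS : Convex ℝ S) (h0 : 0 ∈ S) (hγ0 : γ 0 = a)
    (hγ : ∀ r ∈ S, HasDerivAt γ (Wfield φ ℓ (γ r)) r) (hr : r ∈ S) :
    piHor (γ r) = piHor a + r • Pi.single ℓ 1 := by
  ext m
  have := abs_sub_sub_mul_le_of_hasDerivAt hS (c := (Pi.single ℓ 1 : HorIdx n k → ℝ) m)
    (C := 0) (fun r hr => hasDerivAt_piHor (hγ r hr) m) (by simp) h0 hr
  simp only [zero_mul, abs_nonpos_iff, sub_zero, hγ0] at this
  simp only [Pi.add_apply, Pi.smul_apply, smul_eq_mul]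
  linarith

lemma abs_vertDefect_integralCurve_le (hS : Convex ℝ S) (h0 : 0 ∈ S) (hγ0 : γ 0 = a)
    (hγ : ∀ r ∈ S, HasDerivAt γ (Wfield φ ℓ (γ r)) r) {u : ℝ}
    (hu : ∀ r ∈ S, ‖φ (γ r) - φ a‖ ≤ u) (hr : r ∈ S) :
    |vertDefect φ a (γ r)| ≤ u * |r| := by
  rw [vertDefect_of_piHor_eq (piHor_integralCurve hS h0 hγ0 hγ hr)]
  have := abs_sub_sub_mul_le_of_hasDerivAt hS (fun r hr => hasDerivAt_tauPart (hγ r hr))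
    (fun ρ hρ => (abs_tauPart_Wfield_sub_le (piHor_integralCurve hS h0 hγ0 hγ hρ)).trans
      (hu ρ hρ)) h0 hr
  simpa [hγ0] using this

lemma dPhi_integralCurve_le (hk : k ≤ n) (hS : Convex ℝ S) (h0 : 0 ∈ S) (hγ0 : γ 0 = a)
    (hγ : ∀ r ∈ S, HasDerivAt γ (Wfield φ ℓ (γ r)) r) {u : ℝ}
    (hu : ∀ r ∈ S, ‖φ (γ r) - φ a‖ ≤ u) (hr : r ∈ S) :
    dPhi hk φ (γ r) a ≤ |r| + √(u * |r|) := by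
  have hhor : ∑ m, (piHor (γ r) m - piHor a m) ^ 2 = r ^ 2 := by
    simp [piHor_integralCurve hS h0 hγ0 hγ hr, Pi.single_apply]
  rw [dPhi_eq, hhor, Real.sqrt_sq_eq_abs]
  exact max_le (le_add_of_nonneg_right (Real.sqrt_nonneg _)) (le_add_of_nonneg_of_le
    (abs_nonneg r) (Real.sqrt_le_sqrt (abs_vertDefect_integralCurve_le hS h0 hγ0 hγ hu hr)))

lemma dPhi_integralCurve_le_mul (hk : k ≤ n) {t : ℝ} (ht : 0 ≤ t) (hγ0 : γ 0 = a)
    (hγ : ∀ r ∈ Set.Icc (-t) t, HasDerivAt γ (Wfield φ ℓ (γ r)) r)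
    (hφγ : ContinuousOn (fun r => φ (γ r)) (Set.Icc (-t) t)) {D : EuclideanSpace ℝ (Fin k)}
    (happrox : ∀ r ∈ Set.Icc (-t) t, ‖φ (γ r) - φ a - r • D‖ ≤ dPhi hk φ (γ r) a)
    (hr : r ∈ Set.Icc (-t) t) : dPhi hk φ (γ r) a ≤ (‖D‖ + 3) * t := by
  have h0 : (0 : ℝ) ∈ Set.Icc (-t) t := ⟨by linarith, ht⟩
  obtain ⟨r₀, hr₀, hmax⟩ := isCompact_Icc.exists_isMaxOn ⟨0, h0⟩
    (hφγ.sub continuousOn_const).norm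
  set u := ‖φ (γ r₀) - φ a‖
  have hu (ρ) (hρ : ρ ∈ Set.Icc (-t) t) : ‖φ (γ ρ) - φ a‖ ≤ u := hmax hρ
  have hd (ρ) (hρ : ρ ∈ Set.Icc (-t) t) : dPhi hk φ (γ ρ) a ≤ t + √(u * t) := by
    have hρt : |ρ| ≤ t := abs_le.2 hρ
    refine (dPhi_integralCurve_le hk (convex_Icc _ _) h0 hγ0 hγ hu hρ).trans ?_
    gcongr
  have hamgm : √(u * t) ≤ (u + t) / 2 :=
    Real.sqrt_le_iff.2 ⟨by positivity, by nlinarith [sq_nonneg (u - t)]⟩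
  have hr₀D : ‖r₀ • D‖ ≤ t * ‖D‖ := by
    rw [norm_smul, Real.norm_eq_abs]
    gcongr
    exact abs_le.2 hr₀
  -- `u ≤ (‖D‖ + 1) t + √(u t)` improves itself to `u ≤ (2‖D‖ + 3) t` by AM-GM.
  have hu_le : u ≤ t + √(u * t) + t * ‖D‖ := by
    have := norm_sub_norm_le (φ (γ r₀) - φ a) (r₀ • D)
    linarith [happrox r₀ hr₀, hd r₀ hr₀]
  nlinarith [hd r hr]

lemma isBigO_dPhi_integralCurve (hk : k ≤ n) (hγ0 : γ 0 = a) {U : Set ℝ} (hU : U ∈ 𝓝 0)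
    (hγ : ∀ r ∈ U, HasDerivAt γ (Wfield φ ℓ (γ r)) r)
    (hφγ : ContinuousOn (fun r => φ (γ r)) U) {D : EuclideanSpace ℝ (Fin k)}
    (happrox : ∀ᶠ r in 𝓝 0, ‖φ (γ r) - φ a - r • D‖ ≤ dPhi hk φ (γ r) a) :
    (fun s => dPhi hk φ (γ s) a) =O[𝓝 0] fun s => s := by
  obtain ⟨ε, hε, hball⟩ := Metric.mem_nhds_iff.1 (Filter.inter_mem hU happrox)
  refine Asymptotics.IsBigO.of_bound (‖D‖ + 3) ?_
  filter_upwards [Metric.ball_mem_nhds 0 hε] with s hs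
  have hsub : Set.Icc (-|s|) |s| ⊆ U ∩ {r | ‖φ (γ r) - φ a - r • D‖ ≤ dPhi hk φ (γ r) a} :=
    fun r hr => hball (by
      rw [Metric.mem_ball, Real.dist_0_eq_abs] at hs ⊢
      exact (abs_le.2 hr).trans_lt hs)
  rw [Real.norm_of_nonneg (dPhi_nonneg hk), Real.norm_eq_abs]
  exact dPhi_integralCurve_le_mul hk (abs_nonneg s) hγ0 (fun r hr => hγ r (hsub hr).1)
    (hφγ.mono fun r hr => (hsub hr).1) (fun r hr => (hsub hr).2) ⟨neg_abs_le s, le_abs_self s⟩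

end IntegralCurve

lemma IDcond.isLittleO {hk : k ≤ n} {Ω : Set (MP n k)} {φ : MP n k → EuclideanSpace ℝ (Fin k)}
    {a : MP n k} {L : MP n k → EuclideanSpace ℝ (Fin k)} (h : IDcond hk Ω φ a L) :
    (fun b => φ b - φ a - L (starMul (-a) b)) =o[𝓝[Ω] a] fun b => dPhi hk φ b a := by
  refine Asymptotics.isLittleO_iff.2 fun ε hε => ?_
  obtain ⟨δ, hδ, hbound⟩ := h ε hε
  filter_upwards [self_mem_nhdsWithin, mem_nhdsWithin_of_mem_nhds (Metric.ball_mem_nhds a hδ)]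
    with b hbΩ hb
  exact (hbound b hbΩ (mem_ball_iff_norm.1 hb)).trans
    (mul_le_mul_of_nonneg_left (Real.le_norm_self _) hε.le)

theorem statement6_general (n k : ℕ) (hk : k ≤ n)
    (Ω : Set (MP n k))
    (φ : MP n k → EuclideanSpace ℝ (Fin k)) (hφ : ContinuousOn φ Ω)
    (a : MP n k)
    (M : Matrix (Fin k) (HorIdx n k) ℝ) (hdiff : IDAtWith hk Ω φ a M) :
    ∀ ℓ : HorIdx n k, HasWDerivAt Ω φ ℓ a (WithLp.toLp 2 (fun i => M i ℓ)) := by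
  intro ℓ δ hδ γ hγ0 hmem hγ
  set D : EuclideanSpace ℝ (Fin k) := WithLp.toLp 2 (fun i => M i ℓ)
  have hU : Set.Ioo (-δ) δ ∈ 𝓝 (0 : ℝ) := Ioo_mem_nhds (by linarith) hδ
  have hγc : ContinuousOn γ (Set.Ioo (-δ) δ) := fun r hr =>
    (hγ r hr).continuousAt.continuousWithinAt
  have hγa : Tendsto γ (𝓝 0) (𝓝[Ω] a) := tendsto_nhdsWithin_iff.2
    ⟨hγ0 ▸ (hγ 0 (mem_of_mem_nhds hU)).continuousAt, eventually_of_mem hU hmem⟩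
  have hlin : ∀ᶠ s in 𝓝 (0 : ℝ), ofMatrix M (starMul (-a) (γ s)) = s • D :=
    eventually_of_mem hU fun s hs => ofMatrix_starMul_neg M
      (piHor_integralCurve (convex_Ioo _ _) (mem_of_mem_nhds hU) hγ0 hγ hs)
  have hsmall : (fun s => φ (γ s) - φ a - s • D) =o[𝓝 0] fun s => dPhi hk φ (γ s) a :=
    (hdiff.isLittleO.comp_tendsto hγa).congr' (hlin.mono fun s hs => by simp [hs]) .rfl
  have hbig := isBigO_dPhi_integralCurve hk hγ0 hU hγ (hφ.comp hγc hmem)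
    (hsmall.bound one_pos |>.mono fun s hs => by
      rwa [one_mul, Real.norm_of_nonneg (dPhi_nonneg hk)] at hs)
  have hderiv : HasDerivAt (fun s => φ (γ s)) D 0 := by
    rw [hasDerivAt_iff_isLittleO]
    simpa [hγ0] using hsmall.trans_isBigO hbig
  exact (hasDerivAt_iff_tendsto_slope.1 hderiv).congr fun s => by simp [slope_def_module, hγ0]

/-- Corollary 4.11: if the continuous map `φ` is intrinsic
differentiable at `a ∈ Ω` with intrinsic Jacobian `M`, then for every
`ℓ = 1,…,2n-k` the `∂^{φ_ℓ}`-derivative of `φ` at `a` exists and equals the `ℓ`-th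
column of `M`; in particular the limit along integral curves of `W_ℓ^φ` through `a`
does not depend on the chosen curve. -/
theorem statement6 (n k : ℕ) (hn : 1 ≤ n) (hk1 : 1 ≤ k) (hk : k ≤ n)
    (Ω : Set (MP n k)) (hΩ : IsOpen Ω)
    (φ : MP n k → EuclideanSpace ℝ (Fin k)) (hφ : ContinuousOn φ Ω)
    (a : MP n k) (ha : a ∈ Ω)
    (M : Matrix (Fin k) (HorIdx n k) ℝ) (hdiff : IDAtWith hk Ω φ a M) :
    ∀ ℓ : HorIdx n k, HasWDerivAt Ω φ ℓ a (WithLp.toLp 2 (fun i => M i ℓ)) :=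
  statement6_general n k hk Ω φ hφ a M hdiff

end HeisGraph
end
end

section
/- Let Ω ⊂ ℝ^(2n+1−k) be open and φ : Ω → ℝ^k intrinsic Lipschitz with constant c > 0. Then ρ_φ(a,b) ≤ (1 + c)·d_φ(a,b) for all a, b ∈ Ω. -/
open scoped BigOperators
open MeasureTheory Filter Topology

noncomputable section

namespace HeisGraph

variable {n k : ℕ}

/-! The horizontal parts of `ρ_φ(a,b)` and `d_φ(a,b)` coincide, and their vertical parts differ
by `½⟨φ(a) - φ(b), η' - η⟩`. By Cauchy–Schwarz and the intrinsic Lipschitz bound this pairing is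
at most `c·d_φ(a,b)²`, so the vertical part of `ρ_φ` is at most
`(1 + c/2)·d_φ(a,b)² ≤ ((1 + c)·d_φ(a,b))²`. -/

theorem Fin.sum_univ_eq_sum_lt_add_sum_ge {M : Type*} [AddCommMonoid M] (hk : k ≤ n)
    (f : Fin n → M) :
    ∑ x, f x = ∑ i : Fin k, f ⟨i, by omega⟩ + ∑ j : Fin (n - k), f ⟨j + k, by omega⟩ := by
  rw [← (finSumFinEquiv.trans (finCongr (Nat.add_sub_of_le hk))).sum_comp,
    Fintype.sum_sum_type]
  congr 1
  refine Finset.sum_congr rfl fun j _ => congrArg f (Fin.ext ?_)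
  simp [add_comm]

theorem abs_sum_mul_le_norm_mul_sqrt {ι : Type*} [Fintype ι] (x : EuclideanSpace ℝ ι)
    (y : ι → ℝ) : |∑ i, x i * y i| ≤ ‖x‖ * √(∑ i, y i ^ 2) := by
  rw [EuclideanSpace.norm_eq]
  refine (Finset.abs_sum_le_sum_abs _ _).trans ?_
  simpa [abs_mul, sq_abs] using
    Real.sum_mul_le_sqrt_mul_sqrt Finset.univ (fun i => |x i|) (fun i => |y i|)

section GraphDistance

variable (hk : k ≤ n) (φ : MP n k → EuclideanSpace ℝ (Fin k)) (a b : MP n k)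

theorem vPart_piM_graphMap (j : Fin (n - k)) :
    vPart (piM hk (hMul (hInv (graphMap φ b)) (graphMap φ a))) j = vPart a j - vPart b j := by
  simp [vPart, piM, mkM, hMul, mkH, xPart, yPart, hInv, graphMap, iota, jmap, neg_add_eq_sub]

theorem etaPart_piM_graphMap (i : Fin k) :
    etaPart (piM hk (hMul (hInv (graphMap φ b)) (graphMap φ a))) i
      = etaPart a i - etaPart b i := by
  simp [etaPart, piM, mkM, hMul, mkH, xPart, yPart, hInv, graphMap, iota, jmap, neg_add_eq_sub]

theorem wPart_piM_graphMap (j : Fin (n - k)) :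
    wPart (piM hk (hMul (hInv (graphMap φ b)) (graphMap φ a))) j = wPart a j - wPart b j := by
  simp [wPart, piM, mkM, hMul, mkH, xPart, yPart, hInv, graphMap, iota, jmap, neg_add_eq_sub]

theorem tauPart_piM_graphMap :
    tauPart (piM hk (hMul (hInv (graphMap φ b)) (graphMap φ a)))
      = tauPart a - tauPart b + ∑ i, φ b i * (etaPart b i - etaPart a i)
        + (1 / 2) * ∑ j, (vPart a j * wPart b j - vPart b j * wPart a j) := by
  simp only [tauPart, piM, mkM, xPart, hMul, mkH, hInv, graphMap, iota, Sum.elim_inl, jmap,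
    Sum.elim_lam_const_lam_const, yPart, Sum.elim_inr, add_zero, tPart, one_div, mul_zero,
    mul_dite, dite_mul, zero_mul, zero_sub, Fin.sum_univ_eq_sum_lt_add_sum_ge hk, Fin.is_lt,
    ↓reduceDIte, Fin.eta, Finset.sum_neg_distrib, add_lt_iff_neg_right, not_lt_zero, neg_zero,
    Finset.sum_const_zero, mul_neg, PiLp.neg_apply, neg_add_rev, neg_neg, sub_neg_eq_add, neg_mul,
    zero_add, add_tsub_cancel_right, Finset.sum_sub_distrib]
  simp only [mul_add, add_mul, mul_sub, neg_mul, mul_neg, Finset.sum_add_distrib,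
    Finset.sum_sub_distrib, Finset.sum_neg_distrib]
  ring

theorem dPhi_eq_s12 : dPhi hk φ a b = max
    (√(∑ j, (vPart a j - vPart b j) ^ 2 + ∑ i, (etaPart a i - etaPart b i) ^ 2 +
      ∑ j, (wPart a j - wPart b j) ^ 2))
    (√|tauPart a - tauPart b + ∑ i, φ b i * (etaPart b i - etaPart a i)
      + (1 / 2) * ∑ j, (vPart a j * wPart b j - vPart b j * wPart a j)|) := by
  simp only [dPhi, normM, vPart_piM_graphMap, etaPart_piM_graphMap, wPart_piM_graphMap,
    tauPart_piM_graphMap]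

theorem rhoPhi_le_of_norm_sub_le {c : ℝ} (hc : 0 ≤ c)
    (hφab : ‖φ a - φ b‖ ≤ c * dPhi hk φ a b) :
    rhoPhi φ a b ≤ (1 + c) * dPhi hk φ a b := by
  set H := ∑ j, (vPart a j - vPart b j) ^ 2 + ∑ i, (etaPart a i - etaPart b i) ^ 2 +
    ∑ j, (wPart a j - wPart b j) ^ 2
  set T := tauPart a - tauPart b + ∑ i, φ b i * (etaPart b i - etaPart a i)
    + (1 / 2) * ∑ j, (vPart a j * wPart b j - vPart b j * wPart a j)
  set X := ∑ i, (φ a i - φ b i) * (etaPart b i - etaPart a i)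
  set D := dPhi hk φ a b
  have hD : D = max √H √|T| := dPhi_eq_s12 hk φ a b
  have hD0 : 0 ≤ D := hD ▸ (Real.sqrt_nonneg _).trans (le_max_left _ _)
  have hH : √H ≤ D := hD ▸ le_max_left _ _
  have hT : |T| ≤ D ^ 2 := (Real.sqrt_le_left hD0).1 (hD ▸ le_max_right _ _)
  have hη : √(∑ i, (etaPart b i - etaPart a i) ^ 2) ≤ D := by
    refine le_trans (Real.sqrt_le_sqrt ?_) hH
    simp only [H, sub_sq_comm (etaPart b _)]
    have := Finset.sum_nonneg fun j (_ : j ∈ Finset.univ) => sq_nonneg (vPart a j - vPart b j)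
    have := Finset.sum_nonneg fun j (_ : j ∈ Finset.univ) => sq_nonneg (wPart a j - wPart b j)
    linarith
  have hX : |X| ≤ c * D * D :=
    (abs_sum_mul_le_norm_mul_sqrt (φ a - φ b) _).trans
      (mul_le_mul hφab hη (by positivity) (by positivity))
  have hρ : rhoPhi φ a b = max √H √|T + (1 / 2) * X| := by
    have hsplit : (1 / 2) * ∑ i, (φ a i + φ b i) * (etaPart b i - etaPart a i)
        = ∑ i, φ b i * (etaPart b i - etaPart a i) + (1 / 2) * X := by
      rw [Finset.mul_sum, Finset.mul_sum, ← Finset.sum_add_distrib]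
      exact Finset.sum_congr rfl fun i _ => by ring
    rw [rhoPhi, hsplit]
    congr 3
    ring
  rw [hρ]
  refine max_le (hH.trans (le_mul_of_one_le_left hD0 (by linarith))) ?_
  rw [Real.sqrt_le_left (by positivity)]
  calc |T + (1 / 2) * X| ≤ |T| + (1 / 2) * |X| := by
        simpa [abs_mul] using abs_add_le T ((1 / 2) * X)
    _ ≤ D ^ 2 + (1 / 2) * (c * D * D) := by gcongr
    _ ≤ ((1 + c) * D) ^ 2 := by nlinarith [mul_nonneg hc (mul_nonneg hD0 hD0)]

end GraphDistance

theorem statement12_general (n k : ℕ) (hk : k ≤ n)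
    (Ω : Set (MP n k))
    (φ : MP n k → EuclideanSpace ℝ (Fin k))
    (c : ℝ) (hc : 0 < c)
    (hlip : ∀ a ∈ Ω, ∀ b ∈ Ω, ‖φ a - φ b‖ ≤ c * dPhi hk φ a b) :
    ∀ a ∈ Ω, ∀ b ∈ Ω, rhoPhi φ a b ≤ (1 + c) * dPhi hk φ a b :=
  fun a ha b hb => rhoPhi_le_of_norm_sub_le hk φ a b hc.le (hlip a ha b hb)

/-- Proposition 5.6: if `φ` is intrinsic Lipschitz with constant
`c > 0` on `Ω`, then `ρ_φ(a,b) ≤ (1 + c)·d_φ(a,b)` for all `a, b ∈ Ω`. -/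
theorem statement12 (n k : ℕ) (hn : 1 ≤ n) (hk1 : 1 ≤ k) (hk : k ≤ n)
    (Ω : Set (MP n k)) (hΩ : IsOpen Ω)
    (φ : MP n k → EuclideanSpace ℝ (Fin k)) (hφ : ContinuousOn φ Ω)
    (c : ℝ) (hc : 0 < c)
    (hlip : ∀ a ∈ Ω, ∀ b ∈ Ω, ‖φ a - φ b‖ ≤ c * dPhi hk φ a b) :
    ∀ a ∈ Ω, ∀ b ∈ Ω, rhoPhi φ a b ≤ (1 + c) * dPhi hk φ a b :=
  statement12_general n k hk Ω φ c hc hlip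

end HeisGraph
end
end
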